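/- Suppose (Poly-R₁) and HK^h_B hold. Then for every T>0 there exists a constant C≥1 such that C^{−1} e^{−tφ(λ_D)} h(1,x,y) ≤ q(t,x,y) ≤ C e^{−tφ(λ_D)} h(1,x,y) for all (t,x,y)∈[T,∞)×D×D, where λ_D>0 is the constant in the large-time estimate of HK^h_B. -/

import Mathlib

open MeasureTheory Real Set
open scoped ENNReal

/-- Tail of the Lévy measure: `w(r) = ν((r,∞))`. -/
noncomputable def levyTail (ν : Measure ℝ) (r : ℝ) : ℝ := (ν (Set.Ioi r)).toReal

/-- Laplace exponent `φ(λ) = ∫ (1 - e^{-λ s}) ν(ds)`. -/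
noncomputable def laplaceExp (ν : Measure ℝ) (lam : ℝ) : ℝ :=
  ∫ s, (1 - Real.exp (-(lam * s))) ∂ν

/-- Condition (Poly-R₁); (Poly-∞) is the case `R₁ = ⊤`. -/
def PolyCond (ν : Measure ℝ) (R₁ : ℝ≥0∞) (c c' β₁ β₂ : ℝ) : Prop :=
  ∀ r R : ℝ, 0 < r → r ≤ R → ENNReal.ofReal R < R₁ →
    c * (R / r) ^ β₁ ≤ levyTail ν r / levyTail ν R ∧
      levyTail ν r / levyTail ν R ≤ c' * (R / r) ^ β₂

/-- `ν` is the Lévy measure of a driftless subordinator. -/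
structure IsLevyMeasure (ν : Measure ℝ) : Prop where
  supp : ν (Set.Iic 0) = 0
  tail_fin : ∀ r : ℝ, 0 < r → ν (Set.Ioi r) < ⊤
  integ : IntegrableOn (fun s => s) (Set.Ioc (0:ℝ) 1) ν

/-- `μ t` is the law of `S_t` for the driftless subordinator with Lévy measure `ν`. -/
structure IsSubordinatorLaw (ν : Measure ℝ) (μ : ℝ → Measure ℝ) : Prop where
  levy : IsLevyMeasure ν
  prob : ∀ t : ℝ, 0 < t → IsProbabilityMeasure (μ t)
  nonneg : ∀ t : ℝ, 0 < t → μ t (Set.Iio 0) = 0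
  laplace : ∀ t lam : ℝ, 0 < t → 0 ≤ lam →
    (∫ s, Real.exp (-(lam * s)) ∂(μ t)) = Real.exp (-(t * laplaceExp ν lam))

/-- `H(λ) = φ(λ) - λ φ'(λ)`. -/
noncomputable def Hfun (ν : Measure ℝ) (lam : ℝ) : ℝ :=
  laplaceExp ν lam - lam * deriv (laplaceExp ν) lam

/-- `σ(t,s) = (φ')⁻¹(s/t)` if `s/t < φ'(0+)`, and `σ(t,s) = 0` otherwise. -/
def IsSigmaFun (ν : Measure ℝ) (σ : ℝ → ℝ → ℝ) : Prop :=
  ∀ t s : ℝ, 0 < t → 0 < s →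
    ((∃ lam : ℝ, 0 < lam ∧ s / t < deriv (laplaceExp ν) lam) →
      0 < σ t s ∧ deriv (laplaceExp ν) (σ t s) = s / t) ∧
    ((∀ lam : ℝ, 0 < lam → deriv (laplaceExp ν) lam ≤ s / t) → σ t s = 0)

/-- `φInv` is the inverse of the Laplace exponent `φ` on `(0,∞)`. -/
def IsPhiInv (ν : Measure ℝ) (φInv : ℝ → ℝ) : Prop :=
  ∀ u : ℝ, 0 < u → 0 < φInv u ∧ laplaceExp ν (φInv u) = u

/-- `HInv` is the inverse of `H` on `(0,∞)`. -/
def IsHInv (ν : Measure ℝ) (HInv : ℝ → ℝ) : Prop :=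
  ∀ u : ℝ, 0 < u → 0 < HInv u ∧ Hfun ν (HInv u) = u

open Metric

/-- `V(x,r) = m(B(x,r))`. -/
noncomputable def vol {E : Type*} [PseudoMetricSpace E] [MeasurableSpace E] (m : Measure E) (x : E) (r : ℝ) : ℝ :=
  (m (Metric.ball x r)).toReal

/-- Volume doubling and reverse doubling with exponents `d₁ ≤ d₂` and
localization radius `R_E`. -/
def VolDoubling {E : Type*} [PseudoMetricSpace E] [MeasurableSpace E] (m : Measure E) (R_E : ℝ≥0∞)
    (d₁ d₂ : ℝ) : Prop :=
  ∀ a : ℝ, 1 ≤ a → ∃ CV : ℝ, 1 ≤ CV ∧ ∀ (x : E) (r R : ℝ), 0 < r → r ≤ R →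
    ENNReal.ofReal R < ENNReal.ofReal a * R_E →
    CV⁻¹ * (R / r) ^ d₁ ≤ vol m x R / vol m x r ∧
      vol m x R / vol m x r ≤ CV * (R / r) ^ d₂

/-- Global weak scaling condition with indices `α₁ ≤ α₂`. -/
def WeakScaling (Φ : ℝ → ℝ) (c c' α₁ α₂ : ℝ) : Prop :=
  ∀ r R : ℝ, 0 < r → r ≤ R →
    c * (R / r) ^ α₁ ≤ Φ R / Φ r ∧ Φ R / Φ r ≤ c' * (R / r) ^ α₂

/-- `h` is a boundary function on `D`: it takes values in `[0,1]`, satisfies (H1)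
(non-increasing in time) and (H2) with constant `cH` and exponent `γ` below the
time horizon `T` (`T = ⊤` for unbounded `D`). -/
def IsBoundaryFunction {E : Type*} (D : Set E) (h : ℝ → E → E → ℝ) (T : ℝ≥0∞)
    (cH γ : ℝ) : Prop :=
  (∀ (t : ℝ) (x y : E), 0 < t → x ∈ D → y ∈ D → h t x y ∈ Set.Icc (0:ℝ) 1) ∧
  (∀ (x y : E), x ∈ D → y ∈ D → ∀ s t : ℝ, 0 < s → s ≤ t → h t x y ≤ h s x y) ∧
  (∀ (x y : E), x ∈ D → y ∈ D → ∀ s t : ℝ, 0 < s → s ≤ t → ENNReal.ofReal t < T →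
    s ^ γ * h s x y ≤ cH * (t ^ γ * h t x y))

/-- Two-sided estimate (3.4) for the heat kernel `p_D` of `Y^D`, holding for all times
`t` with `0 < t` satisfying `tcond t`. -/
def HKest {E : Type*} [PseudoMetricSpace E] [MeasurableSpace E] (m : Measure E) (D : Set E)
    (Ψ ΦInv : ℝ → ℝ) (h pD : ℝ → E → E → ℝ)
    (C₀ cl cexl cu cexu : ℝ) (tcond : ℝ → Prop) : Prop :=
  ∀ (t : ℝ) (x y : E), 0 < t → tcond t → x ∈ D → y ∈ D →
    cl * h t x y * min ((vol m x (ΦInv t))⁻¹)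
        (C₀ * t / (vol m x (dist x y) * Ψ (dist x y)) +
          (vol m x (ΦInv t))⁻¹ * Real.exp (-(cexl * dist x y ^ 2 / ΦInv t ^ 2)))
      ≤ pD t x y ∧
    pD t x y ≤ cu * h t x y * min ((vol m x (ΦInv t))⁻¹)
        (C₀ * t / (vol m x (dist x y) * Ψ (dist x y)) +
          (vol m x (ΦInv t))⁻¹ * Real.exp (-(cexu * dist x y ^ 2 / ΦInv t ^ 2)))

/-- Large-time estimate (3.5): `p_D(t,x,y) ≍ e^{-λ_D t} h(1,x,y)` for `t ≥ 1`. -/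
def HKlarge {E : Type*} (D : Set E) (h pD : ℝ → E → E → ℝ) (lamD c₅ c₆ : ℝ) : Prop :=
  ∀ (t : ℝ) (x y : E), 1 ≤ t → x ∈ D → y ∈ D →
    c₅ * Real.exp (-(lamD * t)) * h 1 x y ≤ pD t x y ∧
      pD t x y ≤ c₆ * Real.exp (-(lamD * t)) * h 1 x y

/-- Heat kernel `q(t,x,y) = ∫ p_D(s,x,y) P(S_t ∈ ds)` of the subordinate process. -/
noncomputable def subq {E : Type*} (μ : ℝ → Measure ℝ) (pD : ℝ → E → E → ℝ)
    (t : ℝ) (x y : E) : ℝ :=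
  ∫ s, pD s x y ∂(μ t)

/-- Jump kernel `J(x,y) = ∫ p_D(s,x,y) ν(ds)` of the subordinate process. -/
noncomputable def subJ {E : Type*} (ν : Measure ℝ) (pD : ℝ → E → E → ℝ) (x y : E) : ℝ :=
  ∫ s, pD s x y ∂ν

/-- Green function `G_D(x,y) = ∫_0^∞ q(t,x,y) dt` of the subordinate process. -/
noncomputable def subG {E : Type*} (μ : ℝ → Measure ℝ) (pD : ℝ → E → E → ℝ)
    (x y : E) : ℝ :=
  ∫ t in Set.Ioi (0:ℝ), subq μ pD t x y

/-- `ψ(r) = 1/φ(1/Φ(r))`. -/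
noncomputable def psiFun (ν : Measure ℝ) (Φ : ℝ → ℝ) (r : ℝ) : ℝ :=
  (laplaceExp ν ((Φ r)⁻¹))⁻¹

/-- `𝔅_h(t,x,y) = ∫_{2/φ⁻¹(1/t)}^{4Φ(ρ(x,y))} h(s,x,y) w(s) ds`. -/
noncomputable def sB {E : Type*} [PseudoMetricSpace E] [MeasurableSpace E] (ν : Measure ℝ)
    (h : ℝ → E → E → ℝ) (Φ φInv : ℝ → ℝ) (t : ℝ) (x y : E) : ℝ :=
  ∫ s in Set.Ioc (2 * (φInv (t⁻¹))⁻¹) (4 * Φ (dist x y)), h s x y * levyTail ν s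

/-- Hypotheses of case (1): (Poly-R₁) holds and `HK^h_B` holds. -/
def BddCaseHyp {E : Type*} [PseudoMetricSpace E] [MeasurableSpace E] (m : Measure E) (D : Set E)
    (Φ Ψ ΦInv : ℝ → ℝ) (h pD : ℝ → E → E → ℝ) (ν : Measure ℝ)
    (R₁ : ℝ≥0∞) (cw cw' β₁ β₂ cH γ C₀ cl cexl cu cexu : ℝ) : Prop :=
  PolyCond ν R₁ cw cw' β₁ β₂ ∧
  Bornology.IsBounded D ∧
  ENNReal.ofReal (8 * Φ (Metric.diam D)) < R₁ ∧
  IsBoundaryFunction D h (ENNReal.ofReal (4 * Φ (Metric.diam D) + 1)) cH γ ∧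
  HKest m D Ψ ΦInv h pD C₀ cl cexl cu cexu (fun t => t ≤ 1) ∧
  ∃ lamD c₅ c₆ : ℝ, 0 < lamD ∧ 0 < c₅ ∧ 0 < c₆ ∧ HKlarge D h pD lamD c₅ c₆

/-- Hypotheses of case (2): (Poly-∞) holds and `HK^h_U` holds (with `R_E = ⊤`). -/
def UnbddCaseHyp {E : Type*} [PseudoMetricSpace E] [MeasurableSpace E] (m : Measure E) (D : Set E)
    (Ψ ΦInv : ℝ → ℝ) (h pD : ℝ → E → E → ℝ) (ν : Measure ℝ)
    (R_E : ℝ≥0∞) (cw cw' β₁ β₂ cH γ C₀ cl cexl cu cexu : ℝ) : Prop :=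
  PolyCond ν ⊤ cw cw' β₁ β₂ ∧
  R_E = ⊤ ∧
  IsBoundaryFunction D h ⊤ cH γ ∧
  HKest m D Ψ ΦInv h pD C₀ cl cexl cu cexu (fun _ => True)

/-- On-diagonal expression `h(1/φ⁻¹(1/t),x,y) / V(x, ψ⁻¹(t))`. -/
noncomputable def onDiag {E : Type*} [PseudoMetricSpace E] [MeasurableSpace E] (m : Measure E)
    (h : ℝ → E → E → ℝ) (ΦInv φInv : ℝ → ℝ) (t : ℝ) (x y : E) : ℝ :=
  h ((φInv (t⁻¹))⁻¹) x y / vol m x (ΦInv ((φInv (t⁻¹))⁻¹))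

/-- Off-diagonal expression in Theorem 4.2(ii), with constant `c` in the exponential. -/
noncomputable def offDiag {E : Type*} [PseudoMetricSpace E] [MeasurableSpace E] (ν : Measure ℝ)
    (m : Measure E) (h : ℝ → E → E → ℝ) (Φ Ψ ΦInv φInv : ℝ → ℝ)
    (C₀ c t : ℝ) (x y : E) : ℝ :=
  C₀ / (vol m x (dist x y) * Ψ (dist x y)) *
      (t * sB ν h Φ φInv t x y + h ((φInv (t⁻¹))⁻¹) x y / φInv (t⁻¹)) +
    h ((φInv (t⁻¹))⁻¹) x y / vol m x (ΦInv ((φInv (t⁻¹))⁻¹)) *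
      Real.exp (-(c * dist x y ^ 2 / ΦInv ((φInv (t⁻¹))⁻¹) ^ 2)) +
    h (Φ (dist x y)) x y * (t * levyTail ν (Φ (dist x y))) / vol m x (dist x y)


/-!
Split `q(t,x,y) = E[p_D(S_t,x,y)]` according to the size of `S_t`. For `s ≥ 1`,
`p_D(s) ≍ e^{-λ_D s} h(1)` and `E[e^{-λ_D S_t}] = e^{-t φ(λ_D)}`, so only small values of `S_t`
need care. (Poly-R₁) gives `φ(λ) ≳ λ ^ β₁`, hence the Chernoff bound
`P(S_t ≤ ε) ≤ e^{λ ε - t φ(λ)}` is strong: it rules out an atom of `S_t` at `0` (where `p_D` is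
unconstrained), and for `t ≥ T` it makes `E[S_t ^ (-κ); S_t ≤ 1] ≲ e^{-t φ(λ_D)}`, which pays for
the small-time bound `p_D(s) ≲ h(1) s ^ (-κ)` coming from `HK^h_B`, (H2) and volume doubling.
For the lower bound, `p_D(s) ≳ e^{-λ_D s} h(1)` for all `s > s₁`, and for `s₁` small the same
Chernoff bound gives `P(S_t ≤ s₁) ≤ e^{-t φ(λ_D)} / 2` for all `t ≥ T`.
-/

open Filter Topology

namespace IsLevyMeasure

variable {ν : Measure ℝ}

lemma ae_pos (hν : IsLevyMeasure ν) : ∀ᵐ s ∂ν, 0 < s := by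
  refine measure_mono_null (fun s hs => ?_) hν.supp
  simpa using hs

lemma integrable_one_sub_exp (hν : IsLevyMeasure ν) {lam : ℝ} (hlam : 0 ≤ lam) :
    Integrable (fun s => 1 - exp (-(lam * s))) ν := by
  have hmeas : AEStronglyMeasurable (fun s => 1 - exp (-(lam * s))) ν := by fun_prop
  have hbound : ∀ s, 0 ≤ s → ‖1 - exp (-(lam * s))‖ ≤ min (lam * s) 1 := fun s hs => by
    have := add_one_le_exp (-(lam * s))
    rw [norm_of_nonneg (by simp; positivity)]
    exact le_min (by linarith) (by linarith [exp_pos (-(lam * s))])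
  rw [← integrableOn_univ, ← Iic_union_Ioi (a := (1:ℝ)), ← Iic_union_Ioc_eq_Iic zero_le_one]
  refine (IntegrableOn.union ?_ ?_).union ?_
  · rw [IntegrableOn, Measure.restrict_eq_zero.mpr hν.supp]
    exact integrable_zero_measure
  · refine Integrable.mono' (hν.integ.const_mul lam) hmeas.restrict ?_
    filter_upwards [ae_restrict_mem measurableSet_Ioc] with s hs
    exact (hbound s hs.1.le).trans (min_le_left _ _)
  · have : IsFiniteMeasure (ν.restrict (Ioi 1)) :=
      ⟨by rw [Measure.restrict_apply_univ]; exact hν.tail_fin 1 one_pos⟩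
    refine Integrable.mono' (integrable_const 1) hmeas.restrict ?_
    filter_upwards [ae_restrict_mem measurableSet_Ioi] with s hs
    exact (hbound s (zero_le_one.trans hs.out.le)).trans (min_le_right _ _)

lemma levyTail_le_laplaceExp (hν : IsLevyMeasure ν) {lam : ℝ} (hlam : 0 < lam) :
    (1 - exp (-1)) * levyTail ν lam⁻¹ ≤ laplaceExp ν lam := by
  have hint := hν.integrable_one_sub_exp hlam.le
  have : IsFiniteMeasure (ν.restrict (Ioi lam⁻¹)) :=
    ⟨by rw [Measure.restrict_apply_univ]; exact hν.tail_fin _ (inv_pos.mpr hlam)⟩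
  calc (1 - exp (-1)) * levyTail ν lam⁻¹ = ∫ _ in Ioi lam⁻¹, (1 - exp (-1)) ∂ν := by
        rw [setIntegral_const, levyTail, smul_eq_mul, measureReal_def, mul_comm]
    _ ≤ ∫ s in Ioi lam⁻¹, (1 - exp (-(lam * s))) ∂ν := by
        refine setIntegral_mono_on (integrable_const _) hint.integrableOn measurableSet_Ioi
          fun s hs => ?_
        have : 1 ≤ lam * s := by rw [← inv_mul_le_iff₀ hlam, mul_one]; exact hs.out.le
        gcongr
    _ ≤ laplaceExp ν lam := by
        refine setIntegral_le_integral hint ?_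
        filter_upwards [hν.ae_pos] with s hs
        simp only [Pi.zero_apply, sub_nonneg, exp_le_one_iff, neg_nonpos]
        positivity

end IsLevyMeasure

lemma PolyCond.levyTail_pos {ν : Measure ℝ} {R₁ : ℝ≥0∞} {c c' β₁ β₂ : ℝ}
    (hpoly : PolyCond ν R₁ c c' β₁ β₂) (hc : 0 < c) {R : ℝ} (hR : 0 < R)
    (hRR₁ : ENNReal.ofReal R < R₁) : 0 < levyTail ν R := by
  have h := (hpoly R R hR le_rfl hRR₁).1
  refine ENNReal.toReal_nonneg.lt_of_ne fun h0 => ?_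
  rw [levyTail, ← h0, div_zero] at h
  have : 0 < c * (R / R) ^ β₁ := by positivity
  linarith

lemma PolyCond.exists_rpow_le_laplaceExp {ν : Measure ℝ} {R₁ : ℝ≥0∞} {c c' β₁ β₂ : ℝ}
    (hpoly : PolyCond ν R₁ c c' β₁ β₂) (hν : IsLevyMeasure ν) (hR₁ : 0 < R₁) (hc : 0 < c) :
    ∃ a lam₀ : ℝ, 0 < a ∧ ∀ lam, lam₀ ≤ lam → a * lam ^ β₁ ≤ laplaceExp ν lam := by
  obtain ⟨R₀, -, hR₀pos, hR₀R₁⟩ := ENNReal.lt_iff_exists_real_btwn.mp hR₁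
  rw [ENNReal.ofReal_pos] at hR₀pos
  have hw := hpoly.levyTail_pos hc hR₀pos hR₀R₁
  have he : 0 < 1 - exp (-1) := sub_pos.mpr (exp_lt_one_iff.mpr (by norm_num))
  refine ⟨(1 - exp (-1)) * (c * R₀ ^ β₁ * levyTail ν R₀), R₀⁻¹, by positivity, fun lam hlam => ?_⟩
  have hlam0 : 0 < lam := (inv_pos.mpr hR₀pos).trans_le hlam
  have hscale := (hpoly lam⁻¹ R₀ (inv_pos.mpr hlam0) (inv_le_of_inv_le₀ hR₀pos hlam) hR₀R₁).1
  rw [div_inv_eq_mul, mul_rpow hR₀pos.le hlam0.le, le_div_iff₀ hw] at hscale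
  calc (1 - exp (-1)) * (c * R₀ ^ β₁ * levyTail ν R₀) * lam ^ β₁
      = (1 - exp (-1)) * (c * (R₀ ^ β₁ * lam ^ β₁) * levyTail ν R₀) := by ring
    _ ≤ (1 - exp (-1)) * levyTail ν lam⁻¹ := by gcongr
    _ ≤ laplaceExp ν lam := hν.levyTail_le_laplaceExp hlam0

lemma tendsto_laplaceExp_atTop {ν : Measure ℝ} {a lam₀ β : ℝ} (ha : 0 < a) (hβ : 0 < β)
    (hgrowth : ∀ lam, lam₀ ≤ lam → a * lam ^ β ≤ laplaceExp ν lam) :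
    Tendsto (laplaceExp ν) atTop atTop :=
  tendsto_atTop_mono' _ (eventually_ge_atTop lam₀ |>.mono hgrowth)
    ((tendsto_rpow_atTop hβ).const_mul_atTop ha)

lemma exp_neg_mul_le_exp_neg_mul_mul_exp {T t u v : ℝ} (hTt : T ≤ t) (hvu : v ≤ u) :
    exp (-(t * u)) ≤ exp (-(t * v)) * exp (-(T * (u - v))) := by
  rw [← exp_add, exp_le_exp]
  nlinarith

lemma summable_pow_mul_exp_neg_mul_pow {r c q : ℝ} (hr : 0 < r) (hc : 0 < c) (hq : 1 < q) :
    Summable fun n : ℕ => r ^ n * exp (-(c * q ^ n)) := by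
  have hratio : ∀ n : ℕ, ‖r ^ (n + 1) * exp (-(c * q ^ (n + 1)))‖ / ‖r ^ n * exp (-(c * q ^ n))‖
      = r * exp (-(c * (q - 1)) * q ^ n) := fun n => by
    rw [norm_of_nonneg (by positivity), norm_of_nonneg (by positivity), div_eq_iff (by positivity),
      show -(c * q ^ (n + 1)) = -(c * (q - 1)) * q ^ n + -(c * q ^ n) by ring, exp_add]
    ring
  refine summable_of_ratio_test_tendsto_lt_one zero_lt_one
    (Eventually.of_forall fun n => by positivity) ?_
  simp_rw [hratio]
  simpa using (tendsto_exp_atBot.comp ((tendsto_pow_atTop_atTop_of_one_lt hq).const_mul_atTop_of_neg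
    (by nlinarith : -(c * (q - 1)) < 0))).const_mul r

/-- Dyadic decomposition of `(0, 1]`: on `(2⁻⁽ⁿ⁺¹⁾, 2⁻ⁿ]` the weight `s ^ (-κ)` is at most
`2 ^ (κ (n + 1))`. -/
lemma setLIntegral_Ioc_rpow_neg_le_tsum (μ : Measure ℝ) {κ : ℝ} (hκ : 0 ≤ κ) :
    ∫⁻ s in Ioc 0 1, ENNReal.ofReal (s ^ (-κ)) ∂μ ≤
      ∑' n : ℕ, ENNReal.ofReal ((2 ^ κ) ^ (n + 1)) * μ (Iic ((2 : ℝ) ^ n)⁻¹) := by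
  calc ∫⁻ s in Ioc 0 1, ENNReal.ofReal (s ^ (-κ)) ∂μ
      ≤ ∫⁻ s in Ioc 0 1, ∑' n : ℕ,
          (Iic ((2 : ℝ) ^ n)⁻¹).indicator (fun _ => ENNReal.ofReal ((2 ^ κ) ^ (n + 1))) s ∂μ := by
        refine setLIntegral_mono' measurableSet_Ioc fun s hs => ?_
        obtain ⟨n, hn, hn'⟩ := exists_nat_pow_near (one_le_inv₀ hs.1 |>.mpr hs.2) one_lt_two
        refine le_trans ?_ (ENNReal.le_tsum n)
        rw [indicator_of_mem (mem_Iic.mpr ((le_inv_comm₀ hs.1 (by positivity)).mpr hn))]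
        refine ENNReal.ofReal_le_ofReal ?_
        rw [rpow_neg hs.1.le, ← inv_rpow hs.1.le, rpow_pow_comm zero_le_two]
        exact rpow_le_rpow (inv_pos.mpr hs.1).le hn'.le hκ
    _ ≤ ∫⁻ s, ∑' n : ℕ,
          (Iic ((2 : ℝ) ^ n)⁻¹).indicator (fun _ => ENNReal.ofReal ((2 ^ κ) ^ (n + 1))) s ∂μ :=
        setLIntegral_le_lintegral _ _
    _ = _ := by
        rw [lintegral_tsum fun n => (measurable_const.indicator measurableSet_Iic).aemeasurable]
        simp_rw [lintegral_indicator_const measurableSet_Iic]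

namespace IsSubordinatorLaw

variable {ν : Measure ℝ} {μ : ℝ → Measure ℝ} {t : ℝ}

lemma ae_nonneg (hsub : IsSubordinatorLaw ν μ) (ht : 0 < t) : ∀ᵐ s ∂μ t, 0 ≤ s := by
  refine measure_mono_null (fun s hs => ?_) (hsub.nonneg t ht)
  simpa using hs

lemma integrable_exp (hsub : IsSubordinatorLaw ν μ) (ht : 0 < t) {lam : ℝ} (hlam : 0 ≤ lam) :
    Integrable (fun s => exp (-(lam * s))) (μ t) := by
  have := hsub.prob t ht
  refine Integrable.mono' (integrable_const 1) (by fun_prop) ?_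
  filter_upwards [hsub.ae_nonneg ht] with s hs
  rw [norm_of_nonneg (exp_pos _).le, exp_le_one_iff, neg_nonpos]
  positivity

lemma lintegral_exp (hsub : IsSubordinatorLaw ν μ) (ht : 0 < t) {lam : ℝ} (hlam : 0 ≤ lam) :
    ∫⁻ s, ENNReal.ofReal (exp (-(lam * s))) ∂μ t =
      ENNReal.ofReal (exp (-(t * laplaceExp ν lam))) := by
  rw [← hsub.laplace t lam ht hlam,
    ofReal_integral_eq_lintegral_ofReal (hsub.integrable_exp ht hlam)
      (ae_of_all _ fun s => (exp_pos _).le)]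

lemma measure_Iic_le (hsub : IsSubordinatorLaw ν μ) (ht : 0 < t) {lam : ℝ} (hlam : 0 ≤ lam)
    (ε : ℝ) :
    μ t (Iic ε) ≤ ENNReal.ofReal (exp (lam * ε) * exp (-(t * laplaceExp ν lam))) := by
  have := hsub.prob t ht
  have hchernoff := ProbabilityTheory.measure_le_le_exp_mul_mgf (X := id) (μ := μ t) ε
    (neg_nonpos.mpr hlam) (by simpa [neg_mul] using hsub.integrable_exp ht hlam)
  simp_rw [ProbabilityTheory.mgf, id, neg_mul, neg_neg, hsub.laplace t lam ht hlam] at hchernoff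
  rw [← ofReal_measureReal]
  exact ENNReal.ofReal_le_ofReal hchernoff

lemma measure_Iic_zero (hsub : IsSubordinatorLaw ν μ) (hφ : Tendsto (laplaceExp ν) atTop atTop)
    (ht : 0 < t) : μ t (Iic 0) = 0 := by
  have hlim : Tendsto (fun lam => ENNReal.ofReal (exp (lam * 0) * exp (-(t * laplaceExp ν lam))))
      atTop (𝓝 0) := by
    simpa using ENNReal.tendsto_ofReal (tendsto_exp_atBot.comp (tendsto_neg_atTop_atBot.comp
      (hφ.const_mul_atTop ht)))
  exact le_antisymm (ge_of_tendsto hlim ((eventually_ge_atTop 0).mono fun lam hlam =>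
    hsub.measure_Iic_le ht hlam 0)) zero_le

/-- Take `λ'` with `φ(λ') ≥ φ(λ) + log 4 / T` and `s₁ = log 2 / λ'`: the Chernoff bound gives
`P(S_t ≤ s₁) ≤ 2 e^{-t φ(λ')} ≤ e^{-t φ(λ)} / 2` for all `t ≥ T`. -/
lemma exists_half_le_setLIntegral_Ioi_exp (hsub : IsSubordinatorLaw ν μ)
    (hφ : Tendsto (laplaceExp ν) atTop atTop) {T : ℝ} (hT : 0 < T) {lam : ℝ} (hlam : 0 ≤ lam) :
    ∃ s₁ : ℝ, 0 < s₁ ∧ ∀ t, T ≤ t →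
      ENNReal.ofReal (exp (-(t * laplaceExp ν lam)) / 2) ≤
        ∫⁻ s in Ioi s₁, ENNReal.ofReal (exp (-(lam * s))) ∂μ t := by
  obtain ⟨lam', hlam'φ, hlam'⟩ := ((hφ.eventually_ge_atTop (laplaceExp ν lam + log 4 / T)).and
    (eventually_gt_atTop 0)).exists
  refine ⟨log 2 / lam', div_pos (log_pos one_lt_two) hlam', fun t hTt => ?_⟩
  have ht := hT.trans_le hTt
  set Et := exp (-(t * laplaceExp ν lam))
  have hmass : μ t (Iic (log 2 / lam')) ≤ ENNReal.ofReal (Et / 2) := by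
    refine (hsub.measure_Iic_le ht hlam'.le _).trans (ENNReal.ofReal_le_ofReal ?_)
    have hlog4 : log 4 ≤ T * (laplaceExp ν lam' - laplaceExp ν lam) := by
      rw [← div_le_iff₀' hT]; linarith
    have hquarter : exp (-(T * (laplaceExp ν lam' - laplaceExp ν lam))) ≤ 1 / 4 := by
      rw [one_div, ← exp_log (by norm_num : (0:ℝ) < 4), ← exp_neg, exp_le_exp]
      linarith
    have hexp := exp_neg_mul_le_exp_neg_mul_mul_exp hTt
      (by linarith [div_nonneg (log_nonneg (by norm_num : (1:ℝ) ≤ 4)) hT.le] :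
        laplaceExp ν lam ≤ laplaceExp ν lam')
    rw [mul_div_cancel₀ _ hlam'.ne', exp_log two_pos]
    nlinarith [exp_pos (-(T * (laplaceExp ν lam' - laplaceExp ν lam))),
      exp_pos (-(t * laplaceExp ν lam))]
  have hIic : ∫⁻ s in Iic (log 2 / lam'), ENNReal.ofReal (exp (-(lam * s))) ∂μ t ≤
      ENNReal.ofReal (Et / 2) := by
    refine le_trans ?_ ((setLIntegral_one _).trans_le hmass)
    refine lintegral_mono_ae ((ae_restrict_of_ae (hsub.ae_nonneg ht)).mono fun s hs => ?_)
    exact ENNReal.ofReal_le_one.mpr (exp_le_one_iff.mpr (neg_nonpos.mpr (mul_nonneg hlam hs)))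
  have htotal : ∫⁻ s, ENNReal.ofReal (exp (-(lam * s))) ∂μ t = ENNReal.ofReal Et :=
    hsub.lintegral_exp ht hlam
  rw [← lintegral_add_compl _ (measurableSet_Iic (a := log 2 / lam')), compl_Iic,
    show Et = Et / 2 + Et / 2 by ring, ENNReal.ofReal_add (by positivity) (by positivity)] at htotal
  exact (ENNReal.add_le_add_iff_left ENNReal.ofReal_ne_top).mp (htotal ▸ add_le_add_left hIic _)

/-- Chernoff bound at `λ = b 2ⁿ`, with `t φ(b 2ⁿ) ≥ t φ(λ_D) + T (φ(b 2ⁿ) - φ(λ_D))`. -/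
lemma measure_Iic_inv_two_pow_le (hsub : IsSubordinatorLaw ν μ) {a lam₀ β b lamD : ℝ}
    (ha : 0 ≤ a) (hβ : 0 ≤ β) (hgrowth : ∀ lam, lam₀ ≤ lam → a * lam ^ β ≤ laplaceExp ν lam)
    (hb : 0 < b) (hb₀ : lam₀ ≤ b) (hbφ : laplaceExp ν lamD ≤ a * b ^ β) {T t : ℝ} (hT : 0 < T)
    (hTt : T ≤ t) (n : ℕ) :
    μ t (Iic ((2 : ℝ) ^ n)⁻¹) ≤ ENNReal.ofReal (exp b * exp (T * laplaceExp ν lamD) *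
      exp (-(T * (a * b ^ β) * (2 ^ β) ^ n)) * exp (-(t * laplaceExp ν lamD))) := by
  have h2n : (1 : ℝ) ≤ 2 ^ n := one_le_pow₀ one_le_two
  have hφn : a * b ^ β * (2 ^ β) ^ n ≤ laplaceExp ν (b * 2 ^ n) := by
    have := hgrowth (b * 2 ^ n) (hb₀.trans (le_mul_of_one_le_right hb.le h2n))
    rwa [mul_rpow hb.le (by positivity), ← rpow_pow_comm zero_le_two, ← mul_assoc] at this
  have hφD : laplaceExp ν lamD ≤ laplaceExp ν (b * 2 ^ n) :=
    (hbφ.trans (le_mul_of_one_le_right (by positivity)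
      (one_le_pow₀ (one_le_rpow one_le_two hβ)))).trans hφn
  have hmass := hsub.measure_Iic_le (hT.trans_le hTt) (by positivity : 0 ≤ b * 2 ^ n) (2 ^ n)⁻¹
  rw [mul_inv_cancel_right₀ (by positivity)] at hmass
  refine hmass.trans (ENNReal.ofReal_le_ofReal ?_)
  have hexp := exp_neg_mul_le_exp_neg_mul_mul_exp hTt hφD
  have hexp' : exp (-(T * (laplaceExp ν (b * 2 ^ n) - laplaceExp ν lamD))) ≤
      exp (T * laplaceExp ν lamD) * exp (-(T * (a * b ^ β) * (2 ^ β) ^ n)) := by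
    rw [← exp_add, exp_le_exp]
    nlinarith
  calc exp b * exp (-(t * laplaceExp ν (b * 2 ^ n)))
      ≤ exp b * (exp (-(t * laplaceExp ν lamD)) *
          (exp (T * laplaceExp ν lamD) * exp (-(T * (a * b ^ β) * (2 ^ β) ^ n)))) := by
        gcongr
        exact hexp.trans (by gcongr)
    _ = _ := by ring

/-- The growth `φ(λ) ≥ a λ ^ β` turns the dyadic series into `∑ (2 ^ κ)ⁿ e^{-c (2 ^ β)ⁿ}`. -/
lemma exists_setLIntegral_Ioc_rpow_neg_le (hsub : IsSubordinatorLaw ν μ) {a lam₀ β : ℝ}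
    (ha : 0 < a) (hβ : 0 < β) (hgrowth : ∀ lam, lam₀ ≤ lam → a * lam ^ β ≤ laplaceExp ν lam)
    {T : ℝ} (hT : 0 < T) {κ : ℝ} (hκ : 0 ≤ κ) (lamD : ℝ) :
    ∃ C : ℝ, 0 ≤ C ∧ ∀ t, T ≤ t →
      ∫⁻ s in Ioc 0 1, ENNReal.ofReal (s ^ (-κ)) ∂μ t ≤
        ENNReal.ofReal (C * exp (-(t * laplaceExp ν lamD))) := by
  obtain ⟨b, ⟨hbφ, hb₀⟩, hb⟩ := ((((tendsto_rpow_atTop hβ).const_mul_atTop ha).eventually_ge_atTop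
    (laplaceExp ν lamD)).and (eventually_ge_atTop lam₀) |>.and (eventually_gt_atTop 0)).exists
  set c : ℝ := T * (a * b ^ β)
  have hsum := summable_pow_mul_exp_neg_mul_pow (r := 2 ^ κ) (by positivity) (by positivity : 0 < c)
    (one_lt_rpow one_lt_two hβ)
  set S := ∑' n : ℕ, (2 ^ κ) ^ n * exp (-(c * (2 ^ β) ^ n))
  set K := 2 ^ κ * exp b * exp (T * laplaceExp ν lamD)
  refine ⟨K * S, by positivity, fun t hTt => ?_⟩
  set Et := exp (-(t * laplaceExp ν lamD))
  calc ∫⁻ s in Ioc 0 1, ENNReal.ofReal (s ^ (-κ)) ∂μ t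
      ≤ ∑' n : ℕ, ENNReal.ofReal ((2 ^ κ) ^ (n + 1)) * μ t (Iic ((2 : ℝ) ^ n)⁻¹) :=
        setLIntegral_Ioc_rpow_neg_le_tsum _ hκ
    _ ≤ ∑' n : ℕ, ENNReal.ofReal (K * Et) *
          ENNReal.ofReal ((2 ^ κ) ^ n * exp (-(c * (2 ^ β) ^ n))) := by
        refine ENNReal.tsum_le_tsum fun n => ?_
        grw [hsub.measure_Iic_inv_two_pow_le ha.le hβ.le hgrowth hb hb₀ hbφ hT hTt n,
          ← ENNReal.ofReal_mul (by positivity), ← ENNReal.ofReal_mul (by positivity)]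
        exact le_of_eq (congrArg _ (by ring))
    _ = ENNReal.ofReal (K * S * Et) := by
        rw [ENNReal.tsum_mul_left, ← ENNReal.ofReal_tsum_of_nonneg (fun n => by positivity) hsum,
          ← ENNReal.ofReal_mul (by positivity), mul_right_comm]

end IsSubordinatorLaw

section Integration

variable {μ : Measure ℝ} {f : ℝ → ℝ}

lemma lintegral_le_of_le_rpow_neg_of_le_exp (h0 : μ (Iic 0) = 0) {A B κ lam I J : ℝ}
    (hA : 0 ≤ A) (hB : 0 ≤ B) (hI₀ : 0 ≤ I) (hJ₀ : 0 ≤ J)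
    (hsmall : ∀ s ∈ Ioc (0 : ℝ) 1, f s ≤ A * s ^ (-κ))
    (hlarge : ∀ s, 1 < s → f s ≤ B * exp (-(lam * s)))
    (hI : ∫⁻ s in Ioc 0 1, ENNReal.ofReal (s ^ (-κ)) ∂μ ≤ ENNReal.ofReal I)
    (hJ : ∫⁻ s, ENNReal.ofReal (exp (-(lam * s))) ∂μ ≤ ENNReal.ofReal J) :
    ∫⁻ s, ENNReal.ofReal (f s) ∂μ ≤ ENNReal.ofReal (A * I + B * J) := by
  have hIoc : ∫⁻ s in Ioc 0 1, ENNReal.ofReal (f s) ∂μ ≤ ENNReal.ofReal (A * I) := calc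
    _ ≤ ∫⁻ s in Ioc 0 1, ENNReal.ofReal A * ENNReal.ofReal (s ^ (-κ)) ∂μ :=
        setLIntegral_mono' measurableSet_Ioc fun s hs => by
          rw [← ENNReal.ofReal_mul hA]; exact ENNReal.ofReal_le_ofReal (hsmall s hs)
    _ ≤ ENNReal.ofReal A * ENNReal.ofReal I := by
        rw [lintegral_const_mul' _ _ ENNReal.ofReal_ne_top]; gcongr
    _ = ENNReal.ofReal (A * I) := (ENNReal.ofReal_mul hA).symm
  have hIoi : ∫⁻ s in Ioi 1, ENNReal.ofReal (f s) ∂μ ≤ ENNReal.ofReal (B * J) := calc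
    _ ≤ ∫⁻ s in Ioi 1, ENNReal.ofReal B * ENNReal.ofReal (exp (-(lam * s))) ∂μ :=
        setLIntegral_mono' measurableSet_Ioi fun s hs => by
          rw [← ENNReal.ofReal_mul hB]; exact ENNReal.ofReal_le_ofReal (hlarge s hs)
    _ ≤ ENNReal.ofReal B * ENNReal.ofReal J := by
        rw [lintegral_const_mul' _ _ ENNReal.ofReal_ne_top]
        gcongr
        exact (setLIntegral_le_lintegral _ _).trans hJ
    _ = ENNReal.ofReal (B * J) := (ENNReal.ofReal_mul hB).symm
  calc ∫⁻ s, ENNReal.ofReal (f s) ∂μ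
      = ∫⁻ s in Iic 1, ENNReal.ofReal (f s) ∂μ + ∫⁻ s in Ioi 1, ENNReal.ofReal (f s) ∂μ := by
        rw [← compl_Iic, lintegral_add_compl _ measurableSet_Iic]
    _ ≤ (∫⁻ s in Iic 0, ENNReal.ofReal (f s) ∂μ + ∫⁻ s in Ioc 0 1, ENNReal.ofReal (f s) ∂μ) +
          ∫⁻ s in Ioi 1, ENNReal.ofReal (f s) ∂μ := by
        rw [← Iic_union_Ioc_eq_Iic zero_le_one]
        gcongr
        exact lintegral_union_le _ _ _
    _ ≤ ENNReal.ofReal (A * I + B * J) := by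
        rw [setLIntegral_measure_zero _ _ h0, zero_add,
          ENNReal.ofReal_add (by positivity) (by positivity)]
        exact add_le_add hIoc hIoi

lemma ofReal_mul_le_lintegral_of_exp_le {c lam s₁ J : ℝ} (hc : 0 ≤ c)
    (hlow : ∀ s, s₁ < s → c * exp (-(lam * s)) ≤ f s)
    (hJ : ENNReal.ofReal J ≤ ∫⁻ s in Ioi s₁, ENNReal.ofReal (exp (-(lam * s))) ∂μ) :
    ENNReal.ofReal (c * J) ≤ ∫⁻ s, ENNReal.ofReal (f s) ∂μ := calc
  _ ≤ ENNReal.ofReal c * ∫⁻ s in Ioi s₁, ENNReal.ofReal (exp (-(lam * s))) ∂μ := by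
      rw [ENNReal.ofReal_mul hc]; gcongr
  _ = ∫⁻ s in Ioi s₁, ENNReal.ofReal (c * exp (-(lam * s))) ∂μ := by
      rw [← lintegral_const_mul' _ _ ENNReal.ofReal_ne_top]
      simp_rw [ENNReal.ofReal_mul hc]
  _ ≤ ∫⁻ s in Ioi s₁, ENNReal.ofReal (f s) ∂μ :=
      setLIntegral_mono' measurableSet_Ioi fun s hs => ENNReal.ofReal_le_ofReal (hlow s hs)
  _ ≤ ∫⁻ s, ENNReal.ofReal (f s) ∂μ := setLIntegral_le_lintegral _ _

lemma ENNReal.inv_mul_le_toReal_and_toReal_le_mul {L : ℝ≥0∞} {c C K u : ℝ} (hc : 0 < c)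
    (hu : 0 ≤ u) (hcK : c⁻¹ ≤ K) (hCK : C ≤ K) (hlow : ENNReal.ofReal (c * u) ≤ L)
    (hup : L ≤ ENNReal.ofReal (C * u)) : K⁻¹ * u ≤ L.toReal ∧ L.toReal ≤ K * u := by
  have hK : 0 < K := (inv_pos.mpr hc).trans_le hcK
  refine ⟨(ENNReal.ofReal_le_iff_le_toReal (hup.trans_lt ENNReal.ofReal_lt_top).ne).mp
    ((ENNReal.ofReal_le_ofReal ?_).trans hlow), ENNReal.toReal_le_of_le_ofReal (by positivity)
    (hup.trans (ENNReal.ofReal_le_ofReal (by gcongr)))⟩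
  gcongr
  exact inv_le_of_inv_le₀ hc hcK

end Integration

section Geometry

variable {E : Type*} [PseudoMetricSpace E] [MeasurableSpace E] {m : Measure E} {R_E : ℝ≥0∞}
  {d₁ d₂ : ℝ}

/-- Reverse doubling forbids isolated points: on a ball reduced to its centre the volume ratio
`V(x,R) / V(x,r)` is at most `1`, whereas it must be at least `CV⁻¹ (R / r) ^ d₁`. -/
lemma VolDoubling.exists_mem_ball_ne (hVD : VolDoubling m R_E d₁ d₂) (hRE : 0 < R_E)
    (hd₁ : 0 < d₁) (x : E) {r : ℝ} (hr : 0 < r) : ∃ y ∈ ball x r, y ≠ x := by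
  by_contra! hball
  obtain ⟨R', -, hR'pos, hR'⟩ := ENNReal.lt_iff_exists_real_btwn.mp hRE
  rw [ENNReal.ofReal_pos] at hR'pos
  obtain ⟨CV, hCV1, hCV⟩ := hVD 1 le_rfl
  set R := min r R'
  have hR : 0 < R := lt_min hr hR'pos
  have hk : 1 ≤ (2 * CV) ^ d₁⁻¹ := one_le_rpow (by linarith) (by positivity)
  set ρ := R / (2 * CV) ^ d₁⁻¹
  have hρR : ρ ≤ R := div_le_self hR.le hk
  have hballs : ball x R = ball x ρ := by
    refine (Subset.antisymm (fun z hz => ?_) (ball_subset_ball hρR))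
    rw [hball z (ball_subset_ball (min_le_left _ _) hz)]
    exact mem_ball_self (by positivity)
  have hratio := (hCV x ρ R (by positivity) hρR (by
    rw [ENNReal.ofReal_one, one_mul]
    exact (ENNReal.ofReal_le_ofReal (min_le_right _ _)).trans_lt hR')).1
  rw [vol, hballs, ← vol, div_div_cancel₀ hR.ne', rpow_inv_rpow (by positivity) hd₁.ne',
    mul_left_comm, inv_mul_cancel₀ (by positivity)] at hratio
  linarith [hratio.trans (div_self_le_one _)]

lemma VolDoubling.exists_mul_rpow_le_vol (hVD : VolDoubling m R_E d₁ d₂) (hRE : 0 < R_E)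
    (hm : ∀ (x : E) (r : ℝ), 0 < r → 0 < m (ball x r) ∧ m (ball x r) < ⊤) {R : ℝ} (hR : 0 < R) :
    ∃ c : ℝ, 0 < c ∧
      ∀ (x : E) (r : ℝ), 0 < r → r ≤ R → c * (r / R) ^ d₂ * vol m x R ≤ vol m x r := by
  obtain ⟨n, hn⟩ := ENNReal.exists_nat_mul_gt hRE.ne' (ENNReal.ofReal_ne_top (r := R))
  obtain ⟨CV, hCV1, hCV⟩ := hVD (max 1 n) (le_max_left _ _)
  refine ⟨CV⁻¹, by positivity, fun x r hr hrR => ?_⟩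
  have hvol : 0 < vol m x r := ENNReal.toReal_pos (hm x r hr).1.ne' (hm x r hr).2.ne
  have hdoubling := (hCV x r R hr hrR (hn.trans_le (by
    rw [← ENNReal.ofReal_natCast]; gcongr; exact le_max_right _ _))).2
  rw [div_le_iff₀ hvol] at hdoubling
  have hinv : (r / R) ^ d₂ * (R / r) ^ d₂ = 1 := by
    rw [← mul_rpow (by positivity) (by positivity), div_mul_div_comm, mul_comm r,
      div_self (by positivity), one_rpow]
  calc CV⁻¹ * (r / R) ^ d₂ * vol m x R
      ≤ CV⁻¹ * (r / R) ^ d₂ * (CV * (R / r) ^ d₂ * vol m x r) := by gcongr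
    _ = vol m x r := by
        rw [show CV⁻¹ * (r / R) ^ d₂ * (CV * (R / r) ^ d₂ * vol m x r) =
          CV⁻¹ * CV * ((r / R) ^ d₂ * (R / r) ^ d₂) * vol m x r by ring, hinv,
          inv_mul_cancel₀ (by positivity), one_mul, one_mul]

end Geometry

lemma WeakScaling.mul_rpow_le {Φ : ℝ → ℝ} {c c' α₁ α₂ : ℝ} (hΦ : WeakScaling Φ c c' α₁ α₂)
    (hc : 0 < c) (hα₁ : 0 < α₁) {r R : ℝ} (hr : 0 < r) (hrR : r ≤ R) (hΦr : 0 < Φ r) :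
    R * (c * (Φ r / Φ R)) ^ α₁⁻¹ ≤ r := by
  have hR := hr.trans_le hrR
  have hscale := (hΦ r R hr hrR).1
  have hΦR : 0 < Φ R := (div_pos_iff_of_pos_right hΦr).mp
    ((by positivity : 0 < c * (R / r) ^ α₁).trans_le hscale)
  have key : c * (Φ r / Φ R) ≤ (r / R) ^ α₁ := by
    rw [div_rpow hR.le hr.le, mul_div_assoc', div_le_div_iff₀ (by positivity) hΦr] at hscale
    rw [div_rpow hr.le hR.le, mul_div_assoc', div_le_div_iff₀ hΦR (by positivity)]
    linarith
  calc R * (c * (Φ r / Φ R)) ^ α₁⁻¹ ≤ R * ((r / R) ^ α₁) ^ α₁⁻¹ := by gcongr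
    _ = r := by rw [rpow_rpow_inv (by positivity) hα₁.ne', mul_div_cancel₀ _ hR.ne']

lemma StrictMonoOn.monotoneOn_of_rightInverse {Φ ΦInv : ℝ → ℝ} (hΦ : StrictMonoOn Φ (Ici 0))
    (hΦInv : ∀ s : ℝ, 0 < s → 0 < ΦInv s ∧ Φ (ΦInv s) = s) : MonotoneOn ΦInv (Ioi 0) :=
  fun s hs u hu hsu => (hΦ.le_iff_le (mem_Ici.mpr (hΦInv s hs).1.le)
    (mem_Ici.mpr (hΦInv u hu).1.le)).mp (by rw [(hΦInv s hs).2, (hΦInv u hu).2]; exact hsu)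

lemma IsBoundaryFunction.le_mul_rpow_neg {E : Type*} {D : Set E} {h : ℝ → E → E → ℝ}
    {T : ℝ≥0∞} {cH γ : ℝ} (hbf : IsBoundaryFunction D h T cH γ) (hT : ENNReal.ofReal 1 < T)
    {x y : E} (hx : x ∈ D) (hy : y ∈ D) {s : ℝ} (hs : 0 < s) (hs1 : s ≤ 1) :
    h s x y ≤ cH * h 1 x y * s ^ (-γ) := by
  have h2 := hbf.2.2 x y hx hy s 1 hs hs1 hT
  rw [one_rpow, one_mul] at h2
  rw [rpow_neg hs.le, ← div_eq_mul_inv, le_div_iff₀ (rpow_pos_of_pos hs _)]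
  linarith

section HeatKernel

variable {E : Type*} [MetricSpace E] [MeasurableSpace E] {m : Measure E} {R_E : ℝ≥0∞}
  {d₁ d₂ : ℝ} {D : Set E} {Φ Ψ ΦInv : ℝ → ℝ} {h pD : ℝ → E → E → ℝ}

lemma VolDoubling.diam_pos (hVD : VolDoubling m R_E d₁ d₂) (hRE : 0 < R_E) (hd₁ : 0 < d₁)
    (hD : IsOpen D) (hDne : D.Nonempty) (hDbdd : Bornology.IsBounded D) :
    0 < diam D := by
  obtain ⟨x, hx⟩ := hDne
  obtain ⟨ε, hε, hball⟩ := Metric.isOpen_iff.mp hD x hx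
  obtain ⟨y, hy, hyx⟩ := hVD.exists_mem_ball_ne hRE hd₁ x hε
  exact (dist_pos.mpr hyx).trans_le (dist_le_diam_of_mem hDbdd (hball hy) hx)

/-- Volume doubling up to the scale `diam D + Φ⁻¹(1)`, combined with `Φ⁻¹(s) ≳ s ^ α₁⁻¹`. -/
lemma exists_mul_rpow_le_vol_ΦInv
    (hm : ∀ (x : E) (r : ℝ), 0 < r → 0 < m (ball x r) ∧ m (ball x r) < ⊤)
    (hRE : 0 < R_E) (hd₂ : 0 ≤ d₂) (hVD : VolDoubling m R_E d₁ d₂)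
    (hDne : D.Nonempty) (hDbdd : Bornology.IsBounded D)
    (hΦmono : StrictMonoOn Φ (Ici 0)) {cA cA' α₁ α₂ : ℝ} (hcA : 0 < cA) (hα₁ : 0 < α₁)
    (hΦsc : WeakScaling Φ cA cA' α₁ α₂) (hΦInv : ∀ s : ℝ, 0 < s → 0 < ΦInv s ∧ Φ (ΦInv s) = s) :
    ∃ c : ℝ, 0 < c ∧ ∀ x ∈ D, ∀ s ∈ Ioc (0 : ℝ) 1, c * s ^ (α₁⁻¹ * d₂) ≤ vol m x (ΦInv s) := by
  obtain ⟨x₀, hx₀⟩ := hDne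
  obtain ⟨hr₁, hΦr₁⟩ := hΦInv 1 one_pos
  set r₁ := ΦInv 1
  set R := diam D + r₁
  have hR : 0 < R := add_pos_of_nonneg_of_pos diam_nonneg hr₁
  obtain ⟨CV, hCV, hvol⟩ := hVD.exists_mul_rpow_le_vol hRE hm hR
  have hv₀ : 0 < vol m x₀ r₁ := ENNReal.toReal_pos (hm x₀ r₁ hr₁).1.ne' (hm x₀ r₁ hr₁).2.ne
  refine ⟨CV * (r₁ / R) ^ d₂ * cA ^ (α₁⁻¹ * d₂) * vol m x₀ r₁, by positivity, fun x hx s hs => ?_⟩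
  have hs₀ := hs.1
  obtain ⟨hr, hΦr⟩ := hΦInv s hs₀
  have hrr₁ : ΦInv s ≤ r₁ := hΦmono.monotoneOn_of_rightInverse hΦInv hs.1 (mem_Ioi.mpr one_pos) hs.2
  have hscale := hΦsc.mul_rpow_le hcA hα₁ hr hrr₁ (by rw [hΦr]; exact hs₀)
  rw [hΦr, hΦr₁, div_one] at hscale
  have hball : vol m x₀ r₁ ≤ vol m x R := ENNReal.toReal_mono (hm x R hR).2.ne
    (measure_mono (ball_subset_ball' (by linarith [dist_le_diam_of_mem hDbdd hx₀ hx])))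
  calc CV * (r₁ / R) ^ d₂ * cA ^ (α₁⁻¹ * d₂) * vol m x₀ r₁ * s ^ (α₁⁻¹ * d₂)
      = CV * (r₁ * (cA * s) ^ α₁⁻¹ / R) ^ d₂ * vol m x₀ r₁ := by
        rw [mul_div_right_comm, mul_rpow (by positivity) (by positivity),
          ← rpow_mul (by positivity), mul_rpow hcA.le hs₀.le]
        ring
    _ ≤ CV * (ΦInv s / R) ^ d₂ * vol m x R := by gcongr
    _ ≤ vol m x (ΦInv s) := hvol x _ hr (hrr₁.trans (by linarith [diam_nonneg (s := D)]))

/-- Keep only `V(x, Φ⁻¹(s))⁻¹` in the upper bound of `HK^h_B`, and apply (H2) at time `1`, which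
lies below the horizon `4 Φ(diam D) + 1` because `D` has positive diameter. -/
lemma exists_heatKernel_le_mul_rpow_neg
    (hm : ∀ (x : E) (r : ℝ), 0 < r → 0 < m (ball x r) ∧ m (ball x r) < ⊤)
    (hRE : 0 < R_E) (hd₁ : 0 < d₁) (hd : d₁ ≤ d₂) (hVD : VolDoubling m R_E d₁ d₂)
    (hDopen : IsOpen D) (hDne : D.Nonempty) (hDbdd : Bornology.IsBounded D)
    (hΦ0 : Φ 0 = 0) (hΦmono : StrictMonoOn Φ (Ici 0)) {cA cA' α₁ α₂ : ℝ} (hcA : 0 < cA)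
    (hα₁ : 0 < α₁) (hΦsc : WeakScaling Φ cA cA' α₁ α₂)
    (hΦInv : ∀ s : ℝ, 0 < s → 0 < ΦInv s ∧ Φ (ΦInv s) = s) {cH γ : ℝ} (hcH : 0 ≤ cH) (hγ : 0 ≤ γ)
    (hbf : IsBoundaryFunction D h (ENNReal.ofReal (4 * Φ (diam D) + 1)) cH γ)
    {C₀ cl cexl cu cexu : ℝ} (hcu : 0 ≤ cu)
    (hHK : HKest m D Ψ ΦInv h pD C₀ cl cexl cu cexu (fun t => t ≤ 1)) :
    ∃ A κ : ℝ, 0 ≤ A ∧ 0 ≤ κ ∧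
      ∀ x ∈ D, ∀ y ∈ D, ∀ s ∈ Ioc (0 : ℝ) 1, pD s x y ≤ A * h 1 x y * s ^ (-κ) := by
  have hd₂ : 0 ≤ d₂ := hd₁.le.trans hd
  obtain ⟨c, hc, hvol⟩ := exists_mul_rpow_le_vol_ΦInv hm hRE hd₂ hVD hDne hDbdd hΦmono hcA hα₁
    hΦsc hΦInv
  have hΦdiam : 0 < Φ (diam D) := hΦ0 ▸ hΦmono self_mem_Ici (mem_Ici.mpr diam_nonneg)
    (hVD.diam_pos hRE hd₁ hDopen hDne hDbdd)
  have hT : ENNReal.ofReal 1 < ENNReal.ofReal (4 * Φ (diam D) + 1) :=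
    (ENNReal.ofReal_lt_ofReal_iff (by positivity)).mpr (by linarith)
  refine ⟨cu * cH * c⁻¹, γ + α₁⁻¹ * d₂, by positivity, by positivity, fun x hx y hy s hs => ?_⟩
  have hs₀ := hs.1
  have hhs := (hbf.1 s x y hs₀ hx hy).1
  calc pD s x y ≤ cu * h s x y * (vol m x (ΦInv s))⁻¹ :=
        (hHK s x y hs₀ hs.2 hx hy).2.trans (by gcongr; exact min_le_left _ _)
    _ ≤ cu * (cH * h 1 x y * s ^ (-γ)) * (c * s ^ (α₁⁻¹ * d₂))⁻¹ := by
        have hh := hbf.le_mul_rpow_neg hT hx hy hs₀ hs.2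
        have hV := hvol x hx s hs
        gcongr
        · exact inv_nonneg.mpr ENNReal.toReal_nonneg
        · exact mul_nonneg hcu (hhs.trans hh)
    _ = cu * cH * c⁻¹ * h 1 x y * s ^ (-(γ + α₁⁻¹ * d₂)) := by
        rw [neg_add, rpow_add hs₀, rpow_neg hs₀.le (α₁⁻¹ * d₂), mul_inv]
        ring

/-- The lower bound of `HK^h_B` is at least `V(x, Φ⁻¹(s))⁻¹` times a Gaussian factor, which stays
bounded below on `(s₁, 1]` because `ρ(x,y) ≤ diam D`. -/
lemma exists_mul_le_heatKernel
    (hm : ∀ (x : E) (r : ℝ), 0 < r → 0 < m (ball x r) ∧ m (ball x r) < ⊤)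
    (hDne : D.Nonempty) (hDbdd : Bornology.IsBounded D) (hΨ0 : Ψ 0 = 0)
    (hΨmono : StrictMonoOn Ψ (Ici 0)) (hΦmono : StrictMonoOn Φ (Ici 0))
    (hΦInv : ∀ s : ℝ, 0 < s → 0 < ΦInv s ∧ Φ (ΦInv s) = s) {T : ℝ≥0∞} {cH γ : ℝ}
    (hbf : IsBoundaryFunction D h T cH γ) {C₀ cl cexl cu cexu : ℝ} (hC₀ : C₀ = 0 ∨ C₀ = 1)
    (hcl : 0 < cl) (hcexl : 0 ≤ cexl)
    (hHK : HKest m D Ψ ΦInv h pD C₀ cl cexl cu cexu (fun t => t ≤ 1)) {s₁ : ℝ} (hs₁ : 0 < s₁) :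
    ∃ c : ℝ, 0 < c ∧ ∀ x ∈ D, ∀ y ∈ D, ∀ s ∈ Ioc s₁ 1, c * h 1 x y ≤ pD s x y := by
  obtain ⟨x₀, hx₀⟩ := hDne
  have hΦInv_mono := hΦmono.monotoneOn_of_rightInverse hΦInv
  set R := diam D + ΦInv 1
  have hR : 0 < R := add_pos_of_nonneg_of_pos diam_nonneg (hΦInv 1 one_pos).1
  have hV₀ : 0 < vol m x₀ R := ENNReal.toReal_pos (hm x₀ R hR).1.ne' (hm x₀ R hR).2.ne
  set e₀ := exp (-(cexl * diam D ^ 2 / ΦInv s₁ ^ 2)) with he₀_def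
  refine ⟨cl * (e₀ / vol m x₀ R), by positivity, fun x hx y hy s hs => ?_⟩
  have hs₀ := hs₁.trans hs.1
  have hr := (hΦInv s hs₀).1
  refine le_trans ?_ (hHK s x y hs₀ hs.2 hx hy).1
  set V := vol m x (ΦInv s)
  set P := C₀ * s / (vol m x (dist x y) * Ψ (dist x y))
  set G := exp (-(cexl * dist x y ^ 2 / ΦInv s ^ 2)) with hG_def
  have hV : 0 < V := ENNReal.toReal_pos (hm x _ hr).1.ne' (hm x _ hr).2.ne
  have hVV₀ : (vol m x₀ R)⁻¹ ≤ V⁻¹ := inv_anti₀ hV (ENNReal.toReal_mono (hm x₀ R hR).2.ne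
    (measure_mono (ball_subset_ball' (by
      linarith [dist_le_diam_of_mem hDbdd hx hx₀, hΦInv_mono hs₀ (mem_Ioi.mpr one_pos) hs.2]))))
  have hP : 0 ≤ P := by
    have hΨ : 0 ≤ Ψ (dist x y) :=
      hΨ0 ▸ hΨmono.monotoneOn self_mem_Ici (mem_Ici.mpr dist_nonneg) dist_nonneg
    have : 0 ≤ C₀ := by rcases hC₀ with h | h <;> simp [h]
    exact div_nonneg (by positivity) (mul_nonneg ENNReal.toReal_nonneg hΨ)
  have hG : e₀ ≤ G := by
    have := dist_le_diam_of_mem hDbdd hx hy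
    have := hΦInv_mono hs₁ hs₀ hs.1.le
    have := (hΦInv s₁ hs₁).1
    rw [he₀_def, hG_def]
    gcongr
  have he₀ : e₀ ≤ 1 := exp_le_one_iff.mpr (neg_nonpos.mpr (by positivity))
  have hmin : e₀ / vol m x₀ R ≤ min V⁻¹ (P + V⁻¹ * G) := by
    rw [div_eq_inv_mul]
    refine le_min ((mul_le_of_le_one_right (by positivity) he₀).trans hVV₀) ?_
    linarith [mul_le_mul hVV₀ hG (exp_pos _).le (inv_pos.mpr hV).le]
  have hh1 := (hbf.1 1 x y one_pos hx hy).1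
  have hh1s : h 1 x y ≤ h s x y := hbf.2.1 x y hx hy s 1 hs₀ hs.2
  calc cl * (e₀ / vol m x₀ R) * h 1 x y = cl * h 1 x y * (e₀ / vol m x₀ R) := by ring
    _ ≤ cl * h s x y * min V⁻¹ (P + V⁻¹ * G) := by
        gcongr
        exact mul_nonneg hcl.le (hh1.trans hh1s)

lemma exists_mul_exp_le_heatKernel
    (hm : ∀ (x : E) (r : ℝ), 0 < r → 0 < m (ball x r) ∧ m (ball x r) < ⊤)
    (hDne : D.Nonempty) (hDbdd : Bornology.IsBounded D) (hΨ0 : Ψ 0 = 0)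
    (hΨmono : StrictMonoOn Ψ (Ici 0)) (hΦmono : StrictMonoOn Φ (Ici 0))
    (hΦInv : ∀ s : ℝ, 0 < s → 0 < ΦInv s ∧ Φ (ΦInv s) = s) {T : ℝ≥0∞} {cH γ : ℝ}
    (hbf : IsBoundaryFunction D h T cH γ) {C₀ cl cexl cu cexu : ℝ} (hC₀ : C₀ = 0 ∨ C₀ = 1)
    (hcl : 0 < cl) (hcexl : 0 ≤ cexl)
    (hHK : HKest m D Ψ ΦInv h pD C₀ cl cexl cu cexu (fun t => t ≤ 1))
    {lamD c₅ c₆ : ℝ} (hlamD : 0 ≤ lamD) (hc₅ : 0 < c₅) (hHKlarge : HKlarge D h pD lamD c₅ c₆)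
    {s₁ : ℝ} (hs₁ : 0 < s₁) :
    ∃ c : ℝ, 0 < c ∧
      ∀ x ∈ D, ∀ y ∈ D, ∀ s, s₁ < s → c * h 1 x y * exp (-(lamD * s)) ≤ pD s x y := by
  obtain ⟨c, hc, hsmall⟩ := exists_mul_le_heatKernel hm hDne hDbdd hΨ0 hΨmono hΦmono hΦInv hbf hC₀
    hcl hcexl hHK hs₁
  refine ⟨min c₅ c, lt_min hc₅ hc, fun x hx y hy s hs => ?_⟩
  have hh1 := (hbf.1 1 x y one_pos hx hy).1
  rcases le_or_gt s 1 with hs1 | hs1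
  · have hexp : exp (-(lamD * s)) ≤ 1 :=
      exp_le_one_iff.mpr (neg_nonpos.mpr (mul_nonneg hlamD (hs₁.trans hs).le))
    calc min c₅ c * h 1 x y * exp (-(lamD * s)) ≤ c * h 1 x y :=
          mul_le_of_le_one_right (by positivity) hexp |>.trans (by gcongr; exact min_le_right _ _)
      _ ≤ pD s x y := hsmall x hx y hy s ⟨hs, hs1⟩
  · calc min c₅ c * h 1 x y * exp (-(lamD * s)) ≤ c₅ * exp (-(lamD * s)) * h 1 x y := by
          rw [mul_right_comm]; gcongr; exact min_le_left _ _
      _ ≤ pD s x y := (hHKlarge s x y hs1.le hx hy).1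

end HeatKernel

theorem large_time_heat_kernel_estimates_bounded_general
    {E : Type*} [MetricSpace E] [MeasurableSpace E]
    (m : Measure E) (R_E : ℝ≥0∞) (d₁ d₂ : ℝ)
    (hm : ∀ (x : E) (r : ℝ), 0 < r → 0 < m (Metric.ball x r) ∧ m (Metric.ball x r) < ⊤)
    (hRE : 0 < R_E) (hd₁ : 0 < d₁) (hd : d₁ ≤ d₂) (hVD : VolDoubling m R_E d₁ d₂)
    (D : Set E) (hDopen : IsOpen D) (hDne : D.Nonempty)
    (Φ Ψ : ℝ → ℝ) (cA cA' α₁ α₂ : ℝ)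
    (hΦ0 : Φ 0 = 0) (hΦmono : StrictMonoOn Φ (Set.Ici 0))
    (hΨ0 : Ψ 0 = 0) (hΨmono : StrictMonoOn Ψ (Set.Ici 0))
    (hcA : 0 < cA) (hα₁ : 0 < α₁)
    (hΦsc : WeakScaling Φ cA cA' α₁ α₂)
    (ΦInv : ℝ → ℝ) (hΦInv : ∀ s : ℝ, 0 < s → 0 < ΦInv s ∧ Φ (ΦInv s) = s)
    (h : ℝ → E → E → ℝ) (cH γ : ℝ) (hcH : 0 < cH) (hγ : 0 ≤ γ)
    (pD : ℝ → E → E → ℝ)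
    (hpD_meas : ∀ x y : E, Measurable fun s => pD s x y)
    (hpD_nonneg : ∀ (s : ℝ) (x y : E), 0 ≤ pD s x y)
    (ν : Measure ℝ) (μ : ℝ → Measure ℝ) (hsub : IsSubordinatorLaw ν μ)
    (R₁ : ℝ≥0∞) (cw cw' β₁ β₂ : ℝ) (hR₁ : 0 < R₁)
    (hcw : 0 < cw) (hβ₁ : 0 < β₁)
    (C₀ cl cexl cu cexu : ℝ) (hC₀ : C₀ = 0 ∨ C₀ = 1)
    (hcl : 0 < cl) (hcexl : 0 < cexl) (hcu : 0 < cu)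
    (hpoly : PolyCond ν R₁ cw cw' β₁ β₂)
    (hDbdd : Bornology.IsBounded D)
    (hbf : IsBoundaryFunction D h (ENNReal.ofReal (4 * Φ (Metric.diam D) + 1)) cH γ)
    (hHK : HKest m D Ψ ΦInv h pD C₀ cl cexl cu cexu (fun t => t ≤ 1))
    (lamD c₅ c₆ : ℝ) (hlamD : 0 < lamD) (hc₅ : 0 < c₅) (hc₆ : 0 < c₆)
    (hHKlarge : HKlarge D h pD lamD c₅ c₆) :
    ∀ T : ℝ, 0 < T → ∃ C : ℝ, 1 ≤ C ∧
      ∀ (t : ℝ) (x y : E), T ≤ t → x ∈ D → y ∈ D →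
        C⁻¹ * (Real.exp (-(t * laplaceExp ν lamD)) * h 1 x y) ≤ subq μ pD t x y ∧
          subq μ pD t x y ≤ C * (Real.exp (-(t * laplaceExp ν lamD)) * h 1 x y) := by
  intro T hT
  obtain ⟨a, lam₀, ha, hgrowth⟩ := hpoly.exists_rpow_le_laplaceExp hsub.levy hR₁ hcw
  have hφ := tendsto_laplaceExp_atTop ha hβ₁ hgrowth
  obtain ⟨A, κ, hA, hκ, hsmall⟩ := exists_heatKernel_le_mul_rpow_neg hm hRE hd₁ hd hVD hDopen hDne
    hDbdd hΦ0 hΦmono hcA hα₁ hΦsc hΦInv hcH.le hγ hbf hcu.le hHK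
  obtain ⟨I, hI, hIbound⟩ := hsub.exists_setLIntegral_Ioc_rpow_neg_le ha hβ₁ hgrowth hT hκ lamD
  obtain ⟨s₁, hs₁, hJbound⟩ := hsub.exists_half_le_setLIntegral_Ioi_exp hφ hT hlamD.le
  obtain ⟨c, hc, hlow⟩ := exists_mul_exp_le_heatKernel hm hDne hDbdd hΨ0 hΨmono hΦmono hΦInv hbf
    hC₀ hcl hcexl.le hHK hlamD.le hc₅ hHKlarge hs₁
  refine ⟨max (max (A * I + c₆) (c / 2)⁻¹) 1, le_max_right _ _, fun t x y hTt hx hy => ?_⟩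
  have ht := hT.trans_le hTt
  have hh1 := (hbf.1 1 x y one_pos hx hy).1
  set Et := exp (-(t * laplaceExp ν lamD))
  have hup : ∫⁻ s, ENNReal.ofReal (pD s x y) ∂μ t ≤
      ENNReal.ofReal ((A * I + c₆) * (Et * h 1 x y)) :=
    (lintegral_le_of_le_rpow_neg_of_le_exp (hsub.measure_Iic_zero hφ ht) (by positivity)
      (by positivity) (by positivity) (exp_pos _).le (hsmall x hx y hy)
      (fun s hs => (hHKlarge s x y hs.le hx hy).2.trans_eq (mul_right_comm _ _ _))
      (hIbound t hTt) (hsub.lintegral_exp ht hlamD.le).le).trans_eq (by congr 1; ring)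
  have hlow' : ENNReal.ofReal (c / 2 * (Et * h 1 x y)) ≤ ∫⁻ s, ENNReal.ofReal (pD s x y) ∂μ t :=
    (ofReal_mul_le_lintegral_of_exp_le (by positivity) (hlow x hx y hy)
      (hJbound t hTt)).trans_eq' (by congr 1; ring)
  rw [subq, integral_eq_lintegral_of_nonneg_ae (ae_of_all _ fun s => hpD_nonneg s x y)
    (hpD_meas x y).aestronglyMeasurable]
  exact ENNReal.inv_mul_le_toReal_and_toReal_le_mul (by positivity) (by positivity)
    ((le_max_right _ _).trans (le_max_left _ _)) ((le_max_left _ _).trans (le_max_left _ _))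
    hlow' hup

/-- Theorem 4.7: large-time estimates for the heat kernel of the subordinate process:
q(t,x,y) ≍ e^{-t φ(λ_D)} h(1,x,y) for t ≥ T, under (Poly-R₁) and HK^h_B. -/
theorem large_time_heat_kernel_estimates_bounded
    {E : Type*} [MetricSpace E] [MeasurableSpace E] [BorelSpace E] [ProperSpace E]
    [TopologicalSpace.SeparableSpace E]
    (m : Measure E) (R_E : ℝ≥0∞) (d₁ d₂ : ℝ)
    (hm : ∀ (x : E) (r : ℝ), 0 < r → 0 < m (Metric.ball x r) ∧ m (Metric.ball x r) < ⊤)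
    (hRE : 0 < R_E) (hd₁ : 0 < d₁) (hd : d₁ ≤ d₂) (hVD : VolDoubling m R_E d₁ d₂)
    (D : Set E) (hDopen : IsOpen D) (hDne : D.Nonempty) (hDproper : D ≠ Set.univ)
    (Φ Ψ : ℝ → ℝ) (cA cA' α₁ α₂ cB cB' α₃ α₄ : ℝ)
    (hΦ0 : Φ 0 = 0) (hΦmono : StrictMonoOn Φ (Set.Ici 0))
    (hΨ0 : Ψ 0 = 0) (hΨmono : StrictMonoOn Ψ (Set.Ici 0))
    (hΦΨ : ∀ r : ℝ, 0 ≤ r → Φ r ≤ Ψ r)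
    (hcA : 0 < cA) (hcA' : 0 < cA') (hα₁ : 0 < α₁) (hα₁₂ : α₁ ≤ α₂)
    (hcB : 0 < cB) (hcB' : 0 < cB') (hα₃ : 0 < α₃) (hα₃₄ : α₃ ≤ α₄)
    (hΦsc : WeakScaling Φ cA cA' α₁ α₂) (hΨsc : WeakScaling Ψ cB cB' α₃ α₄)
    (ΦInv : ℝ → ℝ) (hΦInv : ∀ s : ℝ, 0 < s → 0 < ΦInv s ∧ Φ (ΦInv s) = s)
    (h : ℝ → E → E → ℝ) (cH γ : ℝ) (hcH : 0 < cH) (hγ : 0 ≤ γ)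
    (pD : ℝ → E → E → ℝ)
    (hpD_meas : ∀ x y : E, Measurable fun s => pD s x y)
    (hpD_nonneg : ∀ (s : ℝ) (x y : E), 0 ≤ pD s x y)
    (ν : Measure ℝ) (μ : ℝ → Measure ℝ) (hsub : IsSubordinatorLaw ν μ)
    (φInv : ℝ → ℝ) (hφInv : IsPhiInv ν φInv)
    (R₁ : ℝ≥0∞) (cw cw' β₁ β₂ : ℝ) (hR₁ : 0 < R₁)
    (hcw : 0 < cw) (hcw' : 0 < cw') (hβ₁ : 0 < β₁) (hβ : β₁ ≤ β₂)
    (C₀ cl cexl cu cexu : ℝ) (hC₀ : C₀ = 0 ∨ C₀ = 1)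
    (hcl : 0 < cl) (hcexl : 0 < cexl) (hcu : 0 < cu) (hcexu : 0 < cexu)
    (hpoly : PolyCond ν R₁ cw cw' β₁ β₂)
    (hDbdd : Bornology.IsBounded D)
    (hdiam : ENNReal.ofReal (8 * Φ (Metric.diam D)) < R₁)
    (hbf : IsBoundaryFunction D h (ENNReal.ofReal (4 * Φ (Metric.diam D) + 1)) cH γ)
    (hHK : HKest m D Ψ ΦInv h pD C₀ cl cexl cu cexu (fun t => t ≤ 1))
    (lamD c₅ c₆ : ℝ) (hlamD : 0 < lamD) (hc₅ : 0 < c₅) (hc₆ : 0 < c₆)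
    (hHKlarge : HKlarge D h pD lamD c₅ c₆) :
    ∀ T : ℝ, 0 < T → ∃ C : ℝ, 1 ≤ C ∧
      ∀ (t : ℝ) (x y : E), T ≤ t → x ∈ D → y ∈ D →
        C⁻¹ * (Real.exp (-(t * laplaceExp ν lamD)) * h 1 x y) ≤ subq μ pD t x y ∧
          subq μ pD t x y ≤ C * (Real.exp (-(t * laplaceExp ν lamD)) * h 1 x y) :=
  large_time_heat_kernel_estimates_bounded_general m R_E d₁ d₂ hm hRE hd₁ hd hVD D hDopen hDne Φ Ψ
    cA cA' α₁ α₂ hΦ0 hΦmono hΨ0 hΨmono hcA hα₁ hΦsc ΦInv hΦInv h cH γ hcH hγ pD hpD_meas hpD_nonneg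
    ν μ hsub R₁ cw cw' β₁ β₂ hR₁ hcw hβ₁ C₀ cl cexl cu cexu hC₀ hcl hcexl hcu hpoly hDbdd hbf hHK
    lamD c₅ c₆ hlamD hc₅ hc₆ hHKlarge
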